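/- Let k ≥ 1 and x : Fin k → ℕ. The multiset U(x) = Σ_{p=1}^{q} f(G_p) satisfies the braket invariant with respect to x (for every color i, exactly x i of its elements have first component i and exactly x i have second component i), and U(x) is stable (no beneficial exchange step applies to it). -/

import Mathlib

/-- The weight of a braket `(i,j)`: `k` if `i = j`, otherwise the representative
in `{1,…,k−1}` of `(j − i) mod k`. -/
def weight (k : ℕ) (p : Fin k × Fin k) : ℕ :=
  if p.1 = p.2 then k else (p.2.val + k - p.1.val) % k

/-- The greedy independent set `G_p = {i : x i ≥ p}`. -/
def greedySet (k : ℕ) (x : Fin k → ℕ) (p : ℕ) : Finset (Fin k) :=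
  Finset.univ.filter (fun i => p ≤ x i)

/-- The circle braket multiset of a finite set of colors `g_0 < g_1 < … < g_m`:
`{(g_0,g_1), (g_1,g_2), …, (g_{m−1},g_m), (g_m,g_0)}`. -/
def circleBrakets (k : ℕ) (S : Finset (Fin k)) : Multiset (Fin k × Fin k) :=
  ↑((S.sort (· ≤ ·)).zip ((S.sort (· ≤ ·)).rotate 1))

/-- `U(x) = Σ_{p=1}^{q} f(G_p)`, with `q = max_i x i`. -/
def U (k : ℕ) (x : Fin k → ℕ) : Multiset (Fin k × Fin k) :=
  ∑ p ∈ Finset.Icc 1 (Finset.univ.sup x), circleBrakets k (greedySet k x p)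

/-- `C` satisfies the braket invariant with respect to `x`: for every color `i`,
the number of bras `i` and the number of kets `i` in `C` both equal `x i`. -/
def Invariant (k : ℕ) (x : Fin k → ℕ) (C : Multiset (Fin k × Fin k)) : Prop :=
  ∀ i : Fin k, (C.filter (fun p => p.1 = i)).card = x i ∧
    (C.filter (fun p => p.2 = i)).card = x i

/-- `C` is stable: no beneficial exchange step applies to it. -/
def Stable (k : ℕ) (C : Multiset (Fin k × Fin k)) : Prop :=
  ∀ i j i' j' : Fin k, {(i, j), (i', j')} ≤ C →
    min (weight k (i, j)) (weight k (i', j')) ≤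
      min (weight k (i, j')) (weight k (i', j))

/- ### Auxiliary lemmas -/

lemma dlem {k a b : ℕ} (ha : a < k) (hb : b < k) :
    (b + k - a) % k = if a ≤ b then b - a else b + k - a := by
  split
  · have h : b + k - a = (b - a) + k := by omega
    rw [h, Nat.add_mod_right]
    exact Nat.mod_eq_of_lt (by omega)
  · exact Nat.mod_eq_of_lt (by omega)

lemma weight_le {k : ℕ} (hk : 1 ≤ k) (p : Fin k × Fin k) : weight k p ≤ k := by
  unfold weight
  split
  · exact le_rfl
  · exact le_of_lt (Nat.mod_lt _ (by omega))

lemma weight_eq_of_ne {k : ℕ} {a b : Fin k} (h : a ≠ b) :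
    weight k (a, b) = if a.val ≤ b.val then b.val - a.val else b.val + k - a.val := by
  unfold weight
  simp only [if_neg h]
  exact dlem a.isLt b.isLt

/-- Structure of a braket of the circle multiset: both endpoints are in `G`, and
no element of `G` lies strictly inside the arc from `a` to `b`. -/
lemma circle_mem {k : ℕ} {G : Finset (Fin k)} {a b : Fin k}
    (h : (a, b) ∈ circleBrakets k G) :
    a ∈ G ∧ b ∈ G ∧ ∀ m ∈ G, m = a ∨ weight k (a, b) ≤ (m.val + k - a.val) % k := by
  classical
  set l := G.sort (· ≤ ·) with hl
  have hmem : (a, b) ∈ l.zip (l.rotate 1) := h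
  obtain ⟨t, ht, hget⟩ := List.mem_iff_getElem.1 hmem
  have hlen : (l.rotate 1).length = l.length := List.length_rotate l 1
  have htl : t < l.length := by
    have h2 := ht
    simp only [List.length_zip, hlen, min_self] at h2
    exact h2
  have hzip := @List.getElem_zip _ _ l (l.rotate 1) t ht
  rw [hget] at hzip
  have ha : a = l[t] := congrArg Prod.fst hzip
  have hb : b = l[(t + 1) % l.length]'(Nat.mod_lt _ (by omega)) := by
    have h2 : b = (l.rotate 1)[t]'(by omega) := congrArg Prod.snd hzip
    rw [h2]
    exact List.getElem_rotate l 1 t (by omega)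
  have hsorted : ∀ (i j : ℕ) (hi : i < l.length) (hj : j < l.length), i < j →
      (l[i] : Fin k) < l[j] := List.pairwise_iff_getElem.1 (Finset.sortedLT_sort G).pairwise
  have hmemG : ∀ {s : ℕ} (hs : s < l.length), (l[s] : Fin k) ∈ G := by
    intro s hs
    exact (Finset.mem_sort _).1 (List.getElem_mem hs)
  refine ⟨ha ▸ hmemG htl, hb ▸ hmemG _, ?_⟩
  intro m hm
  have hm' : m ∈ l := (Finset.mem_sort _).2 hm
  obtain ⟨s, hs, rfl⟩ := List.mem_iff_getElem.1 hm'
  by_cases hst : s = t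
  · left; subst hst; exact ha.symm
  right
  rcases Nat.lt_or_ge (t + 1) l.length with ht1 | ht1
  · -- b = l[t+1]
    have hmod : (t + 1) % l.length = t + 1 := Nat.mod_eq_of_lt ht1
    have hb' : b = l[t + 1] := by rw [hb]; congr 1
    have hab : a < b := by rw [ha, hb']; exact hsorted t (t + 1) htl ht1 (by omega)
    have hne : a ≠ b := ne_of_lt hab
    rw [weight_eq_of_ne hne, dlem a.isLt (l[s]).isLt]
    have hav : a.val < b.val := hab
    have hbk := b.isLt; have hmk := (l[s]).isLt; have hak := a.isLt
    rcases Nat.lt_or_ge s t with hslt | hsge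
    · have h1v : (l[s]).val < a.val := ha ▸ hsorted s t hs htl hslt
      have h2v : (l[s]).val < b.val := hb' ▸ hsorted s (t + 1) hs ht1 (by omega)
      split_ifs <;> omega
    · have hsgt : t + 1 ≤ s := by omega
      have h3v : b.val ≤ (l[s]).val := by
        rcases eq_or_lt_of_le hsgt with he | hl2
        · subst he; exact le_of_eq (congrArg Fin.val hb')
        · exact le_of_lt (hb' ▸ hsorted (t + 1) s ht1 hs hl2)
      split_ifs <;> omega
  · -- b = l[0]
    have hteq : t + 1 = l.length := by omega
    have hmod : (t + 1) % l.length = 0 := by rw [hteq, Nat.mod_self]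
    have hb' : b = l[0]'(by omega) := by rw [hb]; congr 1
    have hn2 : 2 ≤ l.length := by omega
    have hba : b < a := by rw [ha, hb']; exact hsorted 0 t (by omega) htl (by omega)
    have hbav : b.val < a.val := hba
    have hslt : s < t := by omega
    have h1v : (l[s]).val < a.val := ha ▸ hsorted s t hs htl hslt
    have h2v : b.val ≤ (l[s]).val := by
      rcases Nat.eq_zero_or_pos s with h0 | h0
      · subst h0; exact le_of_eq (congrArg Fin.val hb')
      · exact le_of_lt (hb' ▸ hsorted 0 s (by omega) hs h0)
    have hne : a ≠ b := (ne_of_lt hba).symm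
    rw [weight_eq_of_ne hne, dlem a.isLt (l[s]).isLt]
    have hbk := b.isLt; have hmk := (l[s]).isLt; have hak := a.isLt
    split_ifs <;> omega

/-- Key exchange lemma: if two brakets come from nested circles, a short cross
arc `(i,j')` can't be shorter than both original arcs. -/
lemma key {k : ℕ} (hk : 1 ≤ k) {G G' : Finset (Fin k)} (hGG : G' ⊆ G ∨ G ⊆ G')
    {i j i' j' : Fin k} (h1 : (i, j) ∈ circleBrakets k G) (h2 : (i', j') ∈ circleBrakets k G')
    (hA : weight k (i, j') < weight k (i, j))
    (hB : weight k (i, j') < weight k (i', j')) : False := by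
  obtain ⟨hiG, hjG, harc⟩ := circle_mem h1
  obtain ⟨hi'G, hj'G, harc'⟩ := circle_mem h2
  have hij' : i ≠ j' := by
    intro he
    have : weight k (i, j') = k := by unfold weight; rw [if_pos he]
    have h3 := weight_le hk (i, j)
    omega
  rcases hGG with hsub | hsub
  · rcases harc j' (hsub hj'G) with he | hge
    · exact hij' he.symm
    · have he : weight k (i, j') = (j'.val + k - i.val) % k := by
        unfold weight; rw [if_neg hij']
      omega
  · rcases harc' i (hsub hiG) with he | hge
    · rw [he] at hB; exact lt_irrefl _ hB
    · have hii' : i ≠ i' := fun he2 => by rw [he2] at hB; exact lt_irrefl _ hB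
      have hi'j' : i' ≠ j' := by
        intro he2
        have hlt : (i.val + k - i'.val) % k < k := Nat.mod_lt _ (by omega)
        have : weight k (i', j') = k := by unfold weight; rw [if_pos he2]
        omega
      rw [weight_eq_of_ne hij'] at hB
      rw [weight_eq_of_ne hi'j'] at hB
      rw [weight_eq_of_ne hi'j', dlem i'.isLt i.isLt] at hge
      have hik := i.isLt; have hi'k := i'.isLt; have hj'k := j'.isLt
      have hii'v : i.val ≠ i'.val := fun h => hii' (Fin.ext h)
      have hij'v : i.val ≠ j'.val := fun h => hij' (Fin.ext h)
      have hi'j'v : i'.val ≠ j'.val := fun h => hi'j' (Fin.ext h)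
      split_ifs at hB hge <;> omega

lemma filter_sum_card {α β : Type*} (s : Finset α) (f : α → Multiset β)
    (P : β → Prop) [DecidablePred P] :
    ((∑ a ∈ s, f a).filter P).card = ∑ a ∈ s, ((f a).filter P).card := by
  classical
  induction s using Finset.induction_on with
  | empty => simp
  | insert _ _ h ih => simp [Finset.sum_insert h, Multiset.filter_add, ih]

lemma sort_coe {k : ℕ} (G : Finset (Fin k)) :
    ((G.sort (· ≤ ·) : List (Fin k)) : Multiset (Fin k)) = G.val := by
  rw [Multiset.coe_eq_coe.2 (Finset.sort_perm_toList (s := G) (r := (· ≤ ·)))]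
  exact Finset.coe_toList G

lemma count_fst {k : ℕ} (G : Finset (Fin k)) (i : Fin k) :
    ((circleBrakets k G).filter (fun p => p.1 = i)).card = if i ∈ G then 1 else 0 := by
  classical
  have h1 : (circleBrakets k G).filter (fun p => p.1 = i)
      = (circleBrakets k G).filter (fun p => i = p.1) :=
    Multiset.filter_congr (fun p _ => by constructor <;> exact Eq.symm)
  rw [h1, ← Multiset.count_map]
  have h2 : (circleBrakets k G).map Prod.fst = ↑(G.sort (· ≤ ·)) := by
    unfold circleBrakets
    rw [Multiset.map_coe]
    congr 1
    exact List.map_fst_zip (by rw [List.length_rotate])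
  rw [h2, sort_coe, Multiset.count_eq_of_nodup G.nodup]
  rfl

lemma count_snd {k : ℕ} (G : Finset (Fin k)) (i : Fin k) :
    ((circleBrakets k G).filter (fun p => p.2 = i)).card = if i ∈ G then 1 else 0 := by
  classical
  have h1 : (circleBrakets k G).filter (fun p => p.2 = i)
      = (circleBrakets k G).filter (fun p => i = p.2) :=
    Multiset.filter_congr (fun p _ => by constructor <;> exact Eq.symm)
  rw [h1, ← Multiset.count_map]
  have h2 : (circleBrakets k G).map Prod.snd = ↑((G.sort (· ≤ ·)).rotate 1) := by
    unfold circleBrakets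
    rw [Multiset.map_coe]
    congr 1
    exact List.map_snd_zip (by rw [List.length_rotate])
  rw [h2, Multiset.coe_eq_coe.2 (List.rotate_perm _ 1), sort_coe,
    Multiset.count_eq_of_nodup G.nodup]
  rfl

lemma greedy_anti {k : ℕ} (x : Fin k → ℕ) {p p' : ℕ} (h : p ≤ p') :
    greedySet k x p' ⊆ greedySet k x p := by
  intro i hi
  simp only [greedySet, Finset.mem_filter, Finset.mem_univ, true_and] at *
  omega

/-- `U(x)` satisfies the braket invariant with respect to `x` and is stable. -/
theorem stmt16 (k : ℕ) (hk : 1 ≤ k) (x : Fin k → ℕ) :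
    Invariant k x (U k x) ∧ Stable k (U k x) := by
  constructor
  · intro i
    have hxi : x i ≤ Finset.univ.sup x := Finset.le_sup (Finset.mem_univ i)
    have hIcc : Finset.filter (fun p => p ≤ x i) (Finset.Icc 1 (Finset.univ.sup x))
        = Finset.Icc 1 (x i) := by
      ext p
      simp only [Finset.mem_filter, Finset.mem_Icc]
      omega
    have hG : ∀ p : ℕ, (if i ∈ greedySet k x p then 1 else 0)
        = if p ≤ x i then 1 else 0 := by
      intro p
      simp [greedySet]
    constructor
    · rw [U, filter_sum_card]
      simp only [count_fst, hG]
      rw [← Finset.sum_filter, hIcc]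
      simp [Nat.card_Icc]
    · rw [U, filter_sum_card]
      simp only [count_snd, hG]
      rw [← Finset.sum_filter, hIcc]
      simp [Nat.card_Icc]
  · intro i j i' j' hle
    have hsub := Multiset.subset_of_le hle
    have h1 : (i, j) ∈ U k x := hsub (by simp)
    have h2 : (i', j') ∈ U k x := hsub (by simp)
    obtain ⟨p, hp, hc1⟩ := Multiset.mem_sum.1 h1
    obtain ⟨p', hp', hc2⟩ := Multiset.mem_sum.1 h2
    by_contra hcon
    push_neg at hcon
    have hcc := lt_min_iff.1 hcon
    have hGG : greedySet k x p' ⊆ greedySet k x p ∨ greedySet k x p ⊆ greedySet k x p' := by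
      rcases le_total p p' with h | h
      · exact Or.inl (greedy_anti x h)
      · exact Or.inr (greedy_anti x h)
    rcases le_total (weight k (i, j')) (weight k (i', j)) with hm | hm
    · rw [min_eq_left hm] at hcc
      exact key hk hGG hc1 hc2 hcc.1 hcc.2
    · rw [min_eq_right hm] at hcc
      exact key hk hGG.symm hc2 hc1 hcc.2 hcc.1
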